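/- Let p : K → K' be a right fibration of simplicial sets and let x be a vertex of K. Then the induced map on slice simplicial sets p_{/x} : K_{/x} → K'_{/p(x)} is a trivial fibration (i.e. has the right lifting property with respect to all boundary inclusions ∂Δⁿ ⊂ Δⁿ). -/

import Mathlib

open CategoryTheory Simplicial Opposite SimplexCategory

namespace SSet

/-- Right fibration: RLP against horns `Λ[n, i] ⟶ Δ[n]` with `0 < i`. -/
def IsRightFibration {X Y : SSet} (p : X ⟶ Y) : Prop :=
  ∀ (n : ℕ) (i : Fin (n + 2)), 0 < i → HasLiftingProperty (Λ[n + 1, i].ι) p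

/-- Trivial fibration: RLP against all boundary inclusions `∂Δ[n] ⟶ Δ[n]`. -/
def IsTrivialFibration {X Y : SSet} (p : X ⟶ Y) : Prop :=
  ∀ n : ℕ, HasLiftingProperty (∂Δ[n].ι) p

/-- The functor `[n] ↦ [n] ⋆ Δ⁰ = [n+1]` on the simplex category, sending a monotone map
to its extension fixing the added top element. -/
def coneFunctor : SimplexCategory ⥤ SimplexCategory where
  obj a := SimplexCategory.mk (a.len + 1)
  map {a b} f := SimplexCategory.Hom.mk
    ⟨Fin.snoc (fun j => ((f.toOrderHom j).castSucc : Fin (b.len + 2)))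
      (Fin.last (b.len + 1)), by
      intro c d hcd
      induction d using Fin.lastCases with
      | last => simp [Fin.snoc_last, Fin.le_last]
      | cast d' =>
        have hc : c < Fin.last _ := lt_of_le_of_lt hcd (Fin.castSucc_lt_last d')
        induction c using Fin.lastCases with
        | last => exact absurd rfl (ne_of_lt hc)
        | cast c' =>
          simpa [Fin.snoc_castSucc] using
            Fin.castSucc_le_castSucc_iff.mpr (f.toOrderHom.monotone (by simpa using hcd))⟩
  map_id a := by
    apply SimplexCategory.Hom.ext
    ext j
    induction j using Fin.lastCases with
    | last => simp [Fin.snoc_last]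
    | cast j' => simp [Fin.snoc_castSucc]
  map_comp {a b c} f g := by
    apply SimplexCategory.Hom.ext
    ext j
    induction j using Fin.lastCases with
    | last =>
      simp [Fin.snoc]
      dsimp only [DFunLike.coe, OrderHom.instFunLike]
      simp [Fin.snoc]
    | cast j' =>
      have hj : (j' : ℕ) ≤ a.len := by have := j'.isLt; simp at this; omega
      simp [Fin.snoc]
      dsimp only [DFunLike.coe, OrderHom.instFunLike]
      have hj2 : ((f.toOrderHom j' : Fin _) : ℕ) ≤ b.len := by
        have := (f.toOrderHom j').isLt; simp at this; omega
      simp [Fin.snoc, hj, hj2]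

/-- The cone point inclusion `Δ⁰ ⟶ [n] ⋆ Δ⁰`. -/
def lastPoint (a : SimplexCategory) : (⦋0⦌ : SimplexCategory) ⟶ coneFunctor.obj a :=
  SimplexCategory.Hom.mk ⟨fun _ => Fin.last (a.len + 1), monotone_const⟩

lemma lastPoint_comp {a b : SimplexCategory} (f : a ⟶ b) :
    lastPoint a ≫ coneFunctor.map f = lastPoint b := by
  apply SimplexCategory.Hom.ext
  ext j
  show ((Fin.snoc (α := fun _ => Fin (b.len + 2)) (fun j => ((f.toOrderHom j).castSucc))
    (Fin.last (b.len + 1)) (Fin.last (a.len + 1)) : Fin (b.len + 2)) : ℕ) =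
      (Fin.last (b.len + 1) : ℕ)
  rw [Fin.snoc_last]

/-- The slice simplicial set `K_{/x}` for a vertex `x` of `K`: its `n`-simplices are the
maps `Δⁿ ⋆ Δ⁰ ≅ Δ^{n+1} → K` restricting to `x` on the cone point. -/
def slice (K : SSet) (x : K _⦋0⦌) : SSet where
  obj m := { σ : K.obj (op (coneFunctor.obj m.unop)) // K.map (lastPoint m.unop).op σ = x }
  map {m₁ m₂} f := TypeCat.ofHom fun σ => ⟨K.map (coneFunctor.map f.unop).op σ.1, by
    rw [← FunctorToTypes.map_comp_apply, ← op_comp, lastPoint_comp, σ.2]⟩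
  map_id m := by
    ext σ
    simp
  map_comp {m₁ m₂ m₃} f g := by
    ext σ
    simp [FunctorToTypes.map_comp_apply]

/-- The map `K_{/x} ⟶ K'_{/p(x)}` induced on slices by `p : K ⟶ K'`. -/
def sliceMap {K K' : SSet} (p : K ⟶ K') (x : K _⦋0⦌) :
    slice K x ⟶ slice K' (p.app _ x) where
  app m := TypeCat.ofHom fun σ => ⟨p.app _ σ.1, by rw [← FunctorToTypes.naturality, σ.2]⟩
  naturality {m₁ m₂} f := by
    ext σ
    dsimp [slice]
    apply Subtype.ext
    exact NatTrans.naturality_apply p _ _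

/-!
Under the join adjunction, `f : ∂Δ[n] ⟶ K_{/x}` is a map `∂Δ[n] ⋆ Δ⁰ ⟶ K` sending the cone point
to `x`, `g : Δ[n] ⟶ K'_{/p x}` is an `(n + 1)`-simplex of `K'`, and `∂Δ[n] ⋆ Δ⁰ = Λ[n + 1, n + 1]`.
So a lifting problem for `∂Δ[n] ⊂ Δ[n]` against `p_{/x}` is a filling problem for the outer horn
`Λ[n + 1, n + 1] ⊂ Δ[n + 1]` against `p`, which the right fibration solves. The cone point lies in
the horn, so the filler has last vertex `x` and is the required simplex of `K_{/x}`.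

Concretely, every simplex of `Λ[n + 1, n + 1]` is a collapse of the cone on a proper, possibly
empty, face of `Δ[n]`, and is sent to the same collapse of the value of `f` on that face.
-/

open Finset SSet.stdSimplex

/-- `coneFunctor.map u` is definitionally `coneMap u.toOrderHom`; unlike `coneFunctor.map`,
`coneMap` also covers the empty simplex `β : Fin 0 →o Fin b`, whose cone is the cone point. -/
def coneMap {a b : ℕ} (β : Fin a →o Fin b) : ⦋a⦌ ⟶ ⦋b⦌ :=
  SimplexCategory.Hom.mk
    ⟨Fin.snoc (fun j => (β j).castSucc) (Fin.last b), by
      intro c d hcd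
      induction d using Fin.lastCases with
      | last => simp [Fin.snoc_last, Fin.le_last]
      | cast d =>
        induction c using Fin.lastCases with
        | last => exact absurd hcd (by simp)
        | cast c => simpa using β.monotone (Fin.castSucc_le_castSucc_iff.mp hcd)⟩

lemma coneMap_apply {a b : ℕ} (β : Fin a →o Fin b) (i : Fin (a + 1)) :
    (coneMap β).toOrderHom i =
      if h : (i : ℕ) < a then (β ⟨i, h⟩).castSucc else Fin.last b := by
  change Fin.snoc (α := fun _ => Fin (b + 1)) (fun j => (β j).castSucc) (Fin.last b) i = _
  simp only [Fin.snoc, cast_eq]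
  rfl

lemma coneMap_apply_eq_last_iff {a b : ℕ} (β : Fin a →o Fin b) (i : Fin (a + 1)) :
    (coneMap β).toOrderHom i = Fin.last b ↔ (i : ℕ) = a := by
  rw [coneMap_apply]
  split_ifs with h
  · simp only [Fin.castSucc_ne_last, false_iff]
    omega
  · simp only [true_iff]
    omega

lemma coneMap_eq_const {b : ℕ} (β : Fin 0 →o Fin b) :
    coneMap β = SimplexCategory.const ⦋0⦌ ⦋b⦌ (Fin.last b) :=
  SimplexCategory.Hom.ext_zero_left _ _ ((coneMap_apply_eq_last_iff β 0).mpr rfl)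

section Decomposition

variable {n : ℕ} {a : SimplexCategory}

/- Read `⦋n + 1⦌` as `⦋n⦌ ⋆ Δ⁰`. The vertices that `α : a ⟶ ⦋n + 1⦌` does not send to the cone
point form an initial segment of `a`, of length `baseLen α`, so `α` factors as
`baseCollapse α ≫ coneMap (baseRestrict α)`. -/
def baseLen (α : a ⟶ ⦋n + 1⦌) : ℕ :=
  #{i | α.toOrderHom i ≠ Fin.last (n + 1)}

lemma baseLen_le (α : a ⟶ ⦋n + 1⦌) : baseLen α ≤ a.len + 1 :=
  (card_filter_le _ _).trans_eq (card_fin _)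

lemma lt_baseLen_iff (α : a ⟶ ⦋n + 1⦌) (i : Fin (a.len + 1)) :
    (i : ℕ) < baseLen α ↔ α.toOrderHom i ≠ Fin.last (n + 1) := by
  have eq_last_of_le {j k : Fin (a.len + 1)} (hjk : j ≤ k)
      (hj : α.toOrderHom j = Fin.last (n + 1)) : α.toOrderHom k = Fin.last (n + 1) :=
    Fin.last_le_iff.mp (hj ▸ α.toOrderHom.monotone hjk)
  constructor
  · intro hi hlast
    have : ({j | α.toOrderHom j ≠ Fin.last (n + 1)} : Finset _) ⊆ Iio i := fun j hj => by
      simp only [mem_filter, mem_univ, true_and, mem_Iio] at hj ⊢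
      exact lt_of_not_ge fun hij => hj (eq_last_of_le hij hlast)
    have := (card_le_card this).trans_eq (Fin.card_Iio i)
    exact absurd hi (not_lt.mpr this)
  · intro hi
    have : Iic i ⊆ ({j | α.toOrderHom j ≠ Fin.last (n + 1)} : Finset _) := fun j hj => by
      simp only [mem_filter, mem_univ, true_and, mem_Iic] at hj ⊢
      exact fun hlast => hi (eq_last_of_le hj hlast)
    exact Nat.lt_of_succ_le ((Fin.card_Iic i).symm.trans_le (card_le_card this))

def baseRestrict (α : a ⟶ ⦋n + 1⦌) : Fin (baseLen α) →o Fin (n + 1) where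
  toFun j := (α.toOrderHom ⟨j, j.2.trans_le (baseLen_le α)⟩).castPred
    ((lt_baseLen_iff α _).mp j.2)
  monotone' _ _ h := Fin.castPred_le_castPred_iff.mpr (α.toOrderHom.monotone h)

@[simp]
lemma val_baseRestrict (α : a ⟶ ⦋n + 1⦌) (j : Fin (baseLen α)) :
    (baseRestrict α j : ℕ) = α.toOrderHom ⟨j, j.2.trans_le (baseLen_le α)⟩ :=
  rfl

def baseCollapse (α : a ⟶ ⦋n + 1⦌) : a ⟶ ⦋baseLen α⦌ :=
  SimplexCategory.Hom.mk
    ⟨fun i => ⟨min i (baseLen α), by simp⟩, fun _ _ h => by simpa using Or.inl h⟩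

@[simp]
lemma val_baseCollapse (α : a ⟶ ⦋n + 1⦌) (i : Fin (a.len + 1)) :
    ((baseCollapse α).toOrderHom i : ℕ) = min (i : ℕ) (baseLen α) :=
  rfl

lemma baseCollapse_comp_coneMap (α : a ⟶ ⦋n + 1⦌) :
    baseCollapse α ≫ coneMap (baseRestrict α) = α := by
  ext i : 3
  rw [SimplexCategory.comp_toOrderHom, OrderHom.comp_coe, Function.comp_apply, coneMap_apply]
  split_ifs with h
  · have hi : (i : ℕ) < baseLen α := by simpa using h
    ext
    simp [min_eq_left hi.le]
  · have hi : ¬ (i : ℕ) < baseLen α := by simpa using h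
    exact (not_ne_iff.mp (mt (lt_baseLen_iff α i).mpr hi)).symm

lemma exists_baseCollapse_comp_coneMap_eq {k : ℕ} {α : a ⟶ ⦋n + 1⦌} (θ : a ⟶ ⦋k⦌)
    (ψ : Fin k →o Fin (n + 1)) (h : θ ≫ coneMap ψ = α) :
    ∃ β : Fin (baseLen α) →o Fin k,
      baseCollapse α ≫ coneMap β = θ ∧ baseRestrict α = ψ.comp β := by
  have hα (i : Fin (a.len + 1)) : α.toOrderHom i = (coneMap ψ).toOrderHom (θ.toOrderHom i) := by
    rw [← h]; rfl
  have hθ (i : Fin (a.len + 1)) : (i : ℕ) < baseLen α ↔ (θ.toOrderHom i : ℕ) < k := by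
    have := (θ.toOrderHom i).2
    rw [lt_baseLen_iff, hα, Ne, coneMap_apply_eq_last_iff]
    simp only [len_mk] at this
    omega
  let β : Fin (baseLen α) →o Fin k :=
    ⟨fun j => ⟨θ.toOrderHom ⟨j, j.2.trans_le (baseLen_le α)⟩, (hθ _).mp j.2⟩,
      fun _ _ hj => θ.toOrderHom.monotone hj⟩
  refine ⟨β, ?_, ?_⟩
  · ext i : 3
    rw [comp_toOrderHom, OrderHom.comp_coe, Function.comp_apply, coneMap_apply]
    split_ifs with hi
    · replace hi : (i : ℕ) < baseLen α := by simpa using hi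
      exact Fin.ext (congrArg (fun j => (θ.toOrderHom j : ℕ)) (Fin.ext (min_eq_left hi.le)))
    · replace hi : ¬ (θ.toOrderHom i : ℕ) < k := (hθ i).not.mp (by simpa using hi)
      have := (θ.toOrderHom i).2
      simp only [len_mk] at this
      ext
      simp only [Fin.val_last]
      omega
  · ext j
    rw [val_baseRestrict, hα, coneMap_apply, dif_pos ((hθ _).mp j.2)]
    rfl

lemma baseRestrict_not_surjective {α : a ⟶ ⦋n + 1⦌}
    (h : Set.range α.toOrderHom ∪ {Fin.last (n + 1)} ≠ Set.univ) :
    ¬ Function.Surjective (baseRestrict α) := by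
  obtain ⟨c, hc⟩ := (Set.ne_univ_iff_exists_notMem _).mp h
  simp only [Set.mem_union, Set.mem_range, Set.mem_singleton_iff, not_or, not_exists] at hc
  intro hs
  obtain ⟨j, hj⟩ := hs (c.castPred hc.2)
  exact hc.1 _ (Fin.ext (by simpa using congrArg Fin.val hj))

lemma coneMap_mem_horn {k : ℕ} {β : Fin k →o Fin (n + 1)} (hβ : ¬ Function.Surjective β) :
    objEquiv.symm (coneMap β) ∈ Λ[n + 1, Fin.last (n + 1)].obj (op ⦋k⦌) := by
  obtain ⟨c, hc⟩ := not_forall.mp hβ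
  rw [mem_horn_iff, Set.ne_univ_iff_exists_notMem]
  refine ⟨c.castSucc, ?_⟩
  simp only [Set.mem_union, Set.mem_range, Set.mem_singleton_iff, not_or, not_exists]
  refine ⟨fun i hi => ?_, Fin.castSucc_ne_last c⟩
  change (coneMap β).toOrderHom i = _ at hi
  rw [coneMap_apply] at hi
  split_ifs at hi
  · exact hc ⟨_, Fin.castSucc_injective _ hi⟩
  · exact Fin.castSucc_ne_last c hi.symm

end Decomposition

section ConeHorn

variable {K : SSet} (x : K _⦋0⦌) {n : ℕ} (f : (∂Δ[n] : SSet) ⟶ slice K x)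

/-- The simplex of `K` that `f` assigns to the cone on the face `ψ` of `Δ[n]`; the cone on
the empty face is the vertex `x`. -/
def boundaryConeSimplex {k : ℕ} (ψ : Fin k →o Fin (n + 1)) (hψ : ¬ Function.Surjective ψ) :
    K _⦋k⦌ :=
  match k, ψ, hψ with
  | 0, _, _ => x
  | k + 1, ψ, hψ => (f.app (op ⦋k⦌) ⟨objMk ψ, hψ⟩).1

lemma map_const_last_boundaryConeSimplex {k : ℕ} (ψ : Fin k →o Fin (n + 1))
    (hψ : ¬ Function.Surjective ψ) :
    K.map (SimplexCategory.const ⦋0⦌ ⦋k⦌ (Fin.last k)).op (boundaryConeSimplex x f ψ hψ) =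
      x := by
  cases k with
  | zero =>
    rw [Subsingleton.elim (SimplexCategory.const ⦋0⦌ ⦋0⦌ _) (𝟙 _), op_id, K.map_id_apply]
    rfl
  | succ k => exact (f.app (op ⦋k⦌) ⟨objMk ψ, hψ⟩).2

lemma boundaryConeSimplex_eq_map {k₁ k₂ : ℕ} {ψ₁ : Fin k₁ →o Fin (n + 1)}
    {ψ₂ : Fin k₂ →o Fin (n + 1)} (hψ₁ : ¬ Function.Surjective ψ₁)
    (hψ₂ : ¬ Function.Surjective ψ₂) (β : Fin k₁ →o Fin k₂) (hβ : ψ₁ = ψ₂.comp β) :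
    boundaryConeSimplex x f ψ₁ hψ₁ = K.map (coneMap β).op (boundaryConeSimplex x f ψ₂ hψ₂) := by
  cases k₁ with
  | zero =>
    rw [coneMap_eq_const, map_const_last_boundaryConeSimplex]
    rfl
  | succ k₁ =>
    cases k₂ with
    | zero => exact (β 0).elim0
    | succ k₂ =>
      subst hβ
      exact congrArg Subtype.val (NatTrans.naturality_apply f (mkHom β).op ⟨objMk ψ₂, hψ₂⟩)

lemma map_baseCollapse_boundaryConeSimplex {a : SimplexCategory} {α : a ⟶ ⦋n + 1⦌}
    (hα : ¬ Function.Surjective (baseRestrict α)) {k : ℕ} (θ : a ⟶ ⦋k⦌)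
    (ψ : Fin k →o Fin (n + 1)) (hψ : ¬ Function.Surjective ψ) (h : θ ≫ coneMap ψ = α) :
    K.map (baseCollapse α).op (boundaryConeSimplex x f (baseRestrict α) hα) =
      K.map θ.op (boundaryConeSimplex x f ψ hψ) := by
  obtain ⟨β, hθ, hβ⟩ := exists_baseCollapse_comp_coneMap_eq θ ψ h
  rw [boundaryConeSimplex_eq_map x f hα hψ β hβ, ← K.map_comp_apply, ← op_comp, hθ]

/-- The map `Λ[n + 1, n + 1] = ∂Δ[n] ⋆ Δ⁰ ⟶ K` adjoint to `f`. -/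
def coneHornMap : (Λ[n + 1, Fin.last (n + 1)] : SSet) ⟶ K where
  app m := TypeCat.ofHom fun α => K.map (baseCollapse (objEquiv α.1)).op
    (boundaryConeSimplex x f _ (baseRestrict_not_surjective α.2))
  naturality m₁ m₂ u := by
    ext α
    change K.map _ _ = K.map u (K.map _ _)
    rw [← K.map_comp_apply]
    exact map_baseCollapse_boundaryConeSimplex x f _ (u.unop ≫ baseCollapse (objEquiv α.1)) _
      (baseRestrict_not_surjective α.2) (by rw [Category.assoc, baseCollapse_comp_coneMap]; rfl)

lemma coneHornMap_app_eq {a : SimplexCategory}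
    (α : (Λ[n + 1, Fin.last (n + 1)] : SSet).obj (op a)) {k : ℕ} (θ : a ⟶ ⦋k⦌)
    (ψ : Fin k →o Fin (n + 1)) (hψ : ¬ Function.Surjective ψ) (h : θ ≫ coneMap ψ = objEquiv α.1) :
    (coneHornMap x f).app (op a) α = K.map θ.op (boundaryConeSimplex x f ψ hψ) :=
  map_baseCollapse_boundaryConeSimplex x f _ θ ψ hψ h

variable {K' : SSet} (p : K ⟶ K') (τ : slice K' (p.app _ x) _⦋n⦌)

lemma app_boundaryConeSimplex (hf : f ≫ sliceMap p x = ∂Δ[n].ι ≫ yonedaEquiv.symm τ) {k : ℕ}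
    (ψ : Fin k →o Fin (n + 1)) (hψ : ¬ Function.Surjective ψ) :
    p.app _ (boundaryConeSimplex x f ψ hψ) = K'.map (coneMap ψ).op τ.1 := by
  cases k with
  | zero =>
    rw [coneMap_eq_const]
    exact τ.2.symm
  | succ k =>
    exact congrArg Subtype.val
      (ConcreteCategory.congr_hom (NatTrans.congr_app hf (op ⦋k⦌)) ⟨objMk ψ, hψ⟩)

lemma coneHornMap_comp (hf : f ≫ sliceMap p x = ∂Δ[n].ι ≫ yonedaEquiv.symm τ) :
    coneHornMap x f ≫ p = Λ[n + 1, Fin.last (n + 1)].ι ≫ yonedaEquiv.symm τ.1 := by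
  ext ⟨a⟩ α
  change p.app _ ((coneHornMap x f).app _ α) = (yonedaEquiv.symm τ.1).app _ α.1
  rw [coneHornMap_app_eq x f α _ _ (baseRestrict_not_surjective α.2) (baseCollapse_comp_coneMap _),
    NatTrans.naturality_apply, app_boundaryConeSimplex x f p τ hf]
  erw [← K'.map_comp_apply, ← op_comp, baseCollapse_comp_coneMap]
  rfl

end ConeHorn

section Lift

variable {K K' : SSet} {p : K ⟶ K'} {x : K _⦋0⦌} {n : ℕ} {f : (∂Δ[n] : SSet) ⟶ slice K x}
  {τ : slice K' (p.app _ x) _⦋n⦌}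

lemma hasLift_of_coneHornMap_lift (sq : CommSq f ∂Δ[n].ι (sliceMap p x) (yonedaEquiv.symm τ))
    (L : Δ[n + 1] ⟶ K) (hL : Λ[n + 1, Fin.last (n + 1)].ι ≫ L = coneHornMap x f)
    (hpL : L ≫ p = yonedaEquiv.symm τ.1) : sq.HasLift := by
  obtain ⟨σ, rfl⟩ := yonedaEquiv.symm.surjective L
  have hpσ : p.app _ σ = τ.1 :=
    yonedaEquiv.symm.injective ((yonedaEquiv_symm_comp σ p).symm.trans hpL)
  have map_coneMap {k : ℕ} (ψ : Fin k →o Fin (n + 1)) (hψ : ¬ Function.Surjective ψ) :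
      K.map (coneMap ψ).op σ = boundaryConeSimplex x f ψ hψ :=
    (ConcreteCategory.congr_hom (NatTrans.congr_app hL _) ⟨_, coneMap_mem_horn hψ⟩).trans
      ((coneHornMap_app_eq x f _ (𝟙 _) ψ hψ (Category.id_comp _)).trans (by simp))
  have hσx : K.map (lastPoint ⦋n⦌).op σ = x := by
    have hψ : ¬ Function.Surjective (⊥ : Fin 0 →o Fin (n + 1)) := fun h => (h 0).elim (·.elim0)
    have : lastPoint ⦋n⦌ = coneMap ⊥ := (coneMap_eq_const ⊥).symm
    exact (congrArg (fun θ => K.map θ.op σ) this).trans (map_coneMap ⊥ hψ)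
  refine ⟨⟨{ l := yonedaEquiv.symm ⟨σ, hσx⟩, fac_left := ?_, fac_right := ?_ }⟩⟩
  · ext ⟨a⟩ α
    apply Subtype.ext
    exact map_coneMap _ α.2
  · exact (yonedaEquiv_symm_comp _ _).trans (congrArg _ (Subtype.ext hpσ))

end Lift

/-- if `p : K ⟶ K'` is a right fibration of simplicial sets and `x` is a
vertex of `K`, then the induced map on slices `K_{/x} ⟶ K'_{/p(x)}` is a trivial
fibration. -/
theorem sliceMap_trivialFibration_of_rightFibration {K K' : SSet} (p : K ⟶ K')
    (hp : IsRightFibration p) (x : K _⦋0⦌) :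
    IsTrivialFibration (sliceMap p x) := by
  intro n
  refine ⟨fun {f g} sq => ?_⟩
  obtain ⟨τ, rfl⟩ := yonedaEquiv.symm.surjective g
  have : HasLiftingProperty Λ[n + 1, Fin.last (n + 1)].ι p := hp n _ Fin.last_pos
  have hornSq : CommSq (coneHornMap x f) Λ[n + 1, Fin.last (n + 1)].ι p (yonedaEquiv.symm τ.1) :=
    ⟨coneHornMap_comp x f p τ sq.w⟩
  exact hasLift_of_coneHornMap_lift sq hornSq.lift hornSq.fac_left hornSq.fac_right

end SSet
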